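/- arXiv:1706.06930 — 2 statements merged into one kernel-verified Lean document; each statement's English description precedes it below -/
import Mathlib

section
/- Let n̂ ∈ ℝ³ be a unit vector, u ∈ ℝ, and v, w ∈ ℝ³ with ‖v‖²‖w‖² + u² = 1. Set A = J^+_{n̂} J^-_v, B = J^-_{n̂} J^+_w, C = u J^+_{n̂}, D = J^-_{n̂}. Then A and B are symmetric, C and D are antisymmetric, [A,C] = 0 = [B,D], and A²⊗B² + C²⊗D² = 1⊗1 (i.e., (A²)^λ_μ(B²)^α_β + (C²)^λ_μ(D²)^α_β = δ^λ_μ δ^α_β). -/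
/-- The Levi-Civita symbol on {1,2,3} (indexed by `Fin 3`), with ε₁₂₃ = 1. -/
def eps (a b c : Fin 3) : ℝ :=
  if (a, b, c) = (0, 1, 2) ∨ (a, b, c) = (1, 2, 0) ∨ (a, b, c) = (2, 0, 1) then 1
  else if (a, b, c) = (0, 2, 1) ∨ (a, b, c) = (2, 1, 0) ∨ (a, b, c) = (1, 0, 2) then -1
  else 0

/-- The quaternionic 4×4 matrices: `Jmat (-1) a = J⁺_a` and `Jmat 1 a = J⁻_a`, with
`(J^±_a)_{μν} = ∓(δ_{0μ}δ_{aν} − δ_{aμ}δ_{0ν}) + Σ_{b,c} ε_{abc} δ_{bμ} δ_{cν}`. -/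
def Jmat (s : ℝ) (a : Fin 3) : Matrix (Fin 4) (Fin 4) ℝ :=
  fun μ ν =>
    s * ((if μ = 0 then (1 : ℝ) else 0) * (if ν = a.succ then 1 else 0)
        - (if μ = a.succ then (1 : ℝ) else 0) * (if ν = 0 then 1 else 0))
    + ∑ b : Fin 3, ∑ c : Fin 3,
        eps a b c * (if μ = b.succ then (1 : ℝ) else 0) * (if ν = c.succ then 1 else 0)


open Matrix

/-! The matrices `J^±_n` are left and right multiplication by the imaginary quaternion `n` on
`ℍ ≅ ℝ⁴`. Hence they are antisymmetric, `(J^±_n)² = -‖n‖²`, and every `J⁺` commutes with every `J⁻`.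
A product of a commuting `J⁺` and `J⁻` is therefore symmetric with square `‖n‖²‖v‖²`, so
`A² = ‖v‖²`, `B² = ‖w‖²`, `C² = -u²`, `D² = -1` are scalars and the tensor identity reduces to
`‖v‖²‖w‖² + u² = 1`. -/

def quatMatrix (s : ℝ) (n : Fin 3 → ℝ) : Matrix (Fin 4) (Fin 4) ℝ :=
  !![0, s * n 0, s * n 1, s * n 2;
     -(s * n 0), 0, n 2, -n 1;
     -(s * n 1), -n 2, 0, n 0;
     -(s * n 2), n 1, -n 0, 0]

theorem sum_smul_Jmat (s : ℝ) (n : Fin 3 → ℝ) :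
    ∑ a : Fin 3, n a • Jmat s a = quatMatrix s n := by
  ext i j
  fin_cases i <;> fin_cases j <;>
    simp [quatMatrix, Jmat, eps, Fin.sum_univ_three, Fin.succ_zero_eq_one, Fin.succ_one_eq_two,
      show (2 : Fin 3).succ = 3 from rfl] <;> ring

theorem quatMatrix_transpose (s : ℝ) (n : Fin 3 → ℝ) :
    (quatMatrix s n)ᵀ = -quatMatrix s n := by
  ext i j
  fin_cases i <;> fin_cases j <;> simp [quatMatrix]

theorem commute_quatMatrix (n v : Fin 3 → ℝ) :
    Commute (quatMatrix (-1) n) (quatMatrix 1 v) := by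
  ext i j
  fin_cases i <;> fin_cases j <;> simp [quatMatrix, mul_apply, Fin.sum_univ_four] <;> ring

theorem quatMatrix_mul_self {s : ℝ} (hs : s * s = 1) (n : Fin 3 → ℝ) :
    quatMatrix s n * quatMatrix s n = (-∑ a : Fin 3, n a ^ 2) • 1 := by
  obtain rfl | rfl := mul_self_eq_one_iff.mp hs <;> ext i j <;> fin_cases i <;> fin_cases j <;>
    simp [quatMatrix, mul_apply, Fin.sum_univ_four, Fin.sum_univ_three] <;> ring

theorem Matrix.transpose_mul_eq_self_of_commute {m R : Type*} [Fintype m] [CommRing R]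
    {X Y : Matrix m m R} (hX : Xᵀ = -X) (hY : Yᵀ = -Y) (h : Commute X Y) :
    (X * Y)ᵀ = X * Y := by
  rw [transpose_mul, hX, hY, neg_mul_neg, h.eq]

theorem Commute.mul_mul_self_eq_smul_one {R S : Type*} [CommSemiring R] [Semiring S]
    [Algebra R S] {X Y : S} (h : Commute X Y) {a b : R} (hX : X * X = a • 1)
    (hY : Y * Y = b • 1) : X * Y * (X * Y) = (a * b) • 1 := by
  rw [h.symm.mul_mul_mul_comm, hX, hY, smul_mul_smul, one_mul]

/-- Stratum I: with `A = J⁺_n̂ J⁻_v`, `B = J⁻_n̂ J⁺_w`, `C = u J⁺_n̂`, `D = J⁻_n̂`, where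
`n̂` is a unit vector and `‖v‖²‖w‖² + u² = 1`, one has that `A,B` are symmetric, `C,D`
antisymmetric, `[A,C] = 0 = [B,D]`, and `A²⊗B² + C²⊗D² = 1⊗1`. -/
theorem stmt16 (n v w : Fin 3 → ℝ) (u : ℝ)
    (hn : ∑ a : Fin 3, n a ^ 2 = 1)
    (hc : (∑ a : Fin 3, v a ^ 2) * (∑ a : Fin 3, w a ^ 2) + u ^ 2 = 1)
    (A B C D : Matrix (Fin 4) (Fin 4) ℝ)
    (hA : A = (∑ a : Fin 3, n a • Jmat (-1) a) * (∑ a : Fin 3, v a • Jmat 1 a))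
    (hB : B = (∑ a : Fin 3, n a • Jmat 1 a) * (∑ a : Fin 3, w a • Jmat (-1) a))
    (hC : C = u • (∑ a : Fin 3, n a • Jmat (-1) a))
    (hD : D = ∑ a : Fin 3, n a • Jmat 1 a) :
    Aᵀ = A ∧ Bᵀ = B ∧ Cᵀ = -C ∧ Dᵀ = -D ∧
    A * C = C * A ∧ B * D = D * B ∧
    (∀ (l m a b : Fin 4),
      (A * A) l m * (B * B) a b + (C * C) l m * (D * D) a b =
        (if l = m then (1 : ℝ) else 0) * (if a = b then 1 else 0)) := by
  simp only [sum_smul_Jmat] at hA hB hC hD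
  subst hA hB hC hD
  have hcA := commute_quatMatrix n v
  have hcB := (commute_quatMatrix w n).symm
  have hsqPlus (x : Fin 3 → ℝ) := quatMatrix_mul_self (s := -1) (by norm_num) x
  have hsqMinus (x : Fin 3 → ℝ) := quatMatrix_mul_self (s := 1) (by norm_num) x
  have hAA := hcA.mul_mul_self_eq_smul_one (hsqPlus n) (hsqMinus v)
  have hBB := hcB.mul_mul_self_eq_smul_one (hsqMinus n) (hsqPlus w)
  have hCC : u • quatMatrix (-1) n * (u • quatMatrix (-1) n) = (u * u * -1) • 1 := by
    rw [smul_mul_smul, hsqPlus, hn, smul_smul]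
  refine ⟨transpose_mul_eq_self_of_commute (quatMatrix_transpose ..) (quatMatrix_transpose ..) hcA,
    transpose_mul_eq_self_of_commute (quatMatrix_transpose ..) (quatMatrix_transpose ..) hcB,
    by rw [transpose_smul, quatMatrix_transpose, smul_neg], quatMatrix_transpose ..,
    ((Commute.refl _).mul_left hcA.symm).smul_right u |>.eq,
    ((Commute.refl _).mul_left hcB.symm).eq, fun l m a b => ?_⟩
  rw [hAA, hBB, hCC, hsqMinus, hn]
  simp only [Matrix.smul_apply, one_apply, smul_eq_mul]
  linear_combination (if l = m then (1 : ℝ) else 0) * (if a = b then 1 else 0) * hc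
end

section
/- In the *-algebra 𝒜(ℝ⁸_u) generated by hermitian elements x₁^λ, x₂^α (λ,α ∈ {0,1,2,3}) with relations x₁^λ x₁^μ = x₁^μ x₁^λ, x₂^α x₂^β = x₂^β x₂^α, and x₁^λ x₂^α = u⁰ x₂^α x₁^λ + i Σ_{β,ρ} (J^+_ū)^α_β (J^+_{n̂₁})^λ_ρ x₂^β x₁^ρ (with (u⁰)² + ‖ū‖² = 1, ū ⊥-decomposed along orthonormal n̂₁, n̂₂), the relations are invariant under the SU(2)×SU(2) action x₁^λ ↦ Σ_ν (J^-_{q₁})^λ_ν x₁^ν, x₂^α ↦ Σ_β (J^-_{q₂})^α_β x₂^β for any unit quaternions q₁, q₂. That is, the transformed generators satisfy the same relations with the same R-matrix. -/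
open Matrix Quaternion

/-- The basis `1, e₁, e₂, e₃` of the quaternions ℍ ≅ ℝ⁴. -/
noncomputable def quatBasis : Module.Basis (Fin 4) ℝ ℍ[ℝ] :=
  QuaternionAlgebra.basisOneIJK (-1 : ℝ) 0 (-1)

/-- `J⁺_q`: the matrix of left multiplication by `q` on ℍ ≅ ℝ⁴. -/
noncomputable def JplusQ (q : ℍ[ℝ]) : Matrix (Fin 4) (Fin 4) ℝ :=
  LinearMap.toMatrix quatBasis quatBasis (LinearMap.mulLeft ℝ q)

/-- `J⁻_q`: the matrix of right multiplication by `q̄` on ℍ ≅ ℝ⁴. -/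
noncomputable def JminusQ (q : ℍ[ℝ]) : Matrix (Fin 4) (Fin 4) ℝ :=
  LinearMap.toMatrix quatBasis quatBasis (LinearMap.mulRight ℝ (star q))

open scoped Kronecker

/-!
The substitution `y₁ = J⁻_{q₁} x₁`, `y₂ = J⁻_{q₂} x₂` multiplies both `x₁ ⊗ x₂` and `x₂ ⊗ x₁`
by `M = J⁻_{q₁} ⊗ J⁻_{q₂}`, so `x₁ ⊗ x₂ = R (x₂ ⊗ x₁)` gives `y₁ ⊗ y₂ = M R (x₂ ⊗ x₁)`, which is
`R (y₂ ⊗ y₁)` as soon as `M` commutes with `R`. Left and right quaternion multiplications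
commute, so `J⁻_q` commutes with every `J⁺_p`, hence `M` commutes with
`R = u⁰ 1 ⊗ 1 + i J⁺_{n̂₁} ⊗ J⁺_ū`.
-/

namespace Matrix

section SmulVec

variable {K V W U : Type*} {l m n p : Type*} [Fintype m]
  [CommSemiring K] [AddCommMonoid V] [Module K V]

def smulVec (M : Matrix l m K) (v : m → V) : l → V := fun i => ∑ j, M i j • v j

theorem smulVec_smulVec [Fintype n] (M : Matrix l m K) (N : Matrix m n K) (v : n → V) :
    M.smulVec (N.smulVec v) = (M * N).smulVec v := by
  ext i
  simp only [smulVec, Finset.smul_sum, smul_smul, mul_apply, Finset.sum_smul]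
  exact Finset.sum_comm

theorem smulVec_eq_of_commute {M R : Matrix m m K} (h : Commute M R) {z w : m → V}
    (hzw : z = R.smulVec w) : M.smulVec z = R.smulVec (M.smulVec w) := by
  rw [hzw, smulVec_smulVec, h.eq, smulVec_smulVec]

variable [AddCommMonoid W] [Module K W] [AddCommMonoid U] [Module K U]

theorem kronecker_smulVec_bilin [Fintype p] (B : V →ₗ[K] W →ₗ[K] U) (M : Matrix l m K)
    (N : Matrix n p K) (x : m → V) (y : p → W) :
    (M ⊗ₖ N).smulVec (fun q => B (x q.1) (y q.2)) =
      fun q => B (M.smulVec x q.1) (N.smulVec y q.2) := by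
  ext ⟨i, j⟩
  simp only [smulVec, kronecker_apply, map_sum, map_smul, LinearMap.sum_apply,
    LinearMap.smul_apply, Fintype.sum_prod_type, Finset.smul_sum, smul_smul]
  rw [Finset.sum_comm]
  simp only [mul_comm]

end SmulVec

section Algebra

variable {K A : Type*} {m n : Type*} [Fintype m] [Fintype n]
  [CommSemiring K] [Semiring A] [Algebra K A]

theorem commute_smulVec {x : m → A} {y : n → A} (h : ∀ i j, Commute (x i) (y j))
    (M : Matrix m m K) (N : Matrix n n K) (i : m) (j : n) :
    Commute (M.smulVec x i) (N.smulVec y j) :=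
  Commute.sum_left _ _ _ fun k _ => Commute.sum_right _ _ _ fun k' _ =>
    ((h k k').smul_left _).smul_right _

theorem exchange_relation_smulVec {M : Matrix m m K} {N : Matrix n n K}
    {R : Matrix (m × n) (m × n) K} (hR : Commute (M ⊗ₖ N) R) {x : m → A} {y : n → A}
    (h : (fun q => x q.1 * y q.2) = R.smulVec fun q => y q.2 * x q.1) :
    (fun q => M.smulVec x q.1 * N.smulVec y q.2) =
      R.smulVec fun q => N.smulVec y q.2 * M.smulVec x q.1 := by
  calc (fun q => M.smulVec x q.1 * N.smulVec y q.2)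
      = (M ⊗ₖ N).smulVec fun q => x q.1 * y q.2 :=
        (kronecker_smulVec_bilin (LinearMap.mul K A) M N x y).symm
    _ = R.smulVec ((M ⊗ₖ N).smulVec fun q => y q.2 * x q.1) := smulVec_eq_of_commute hR h
    _ = R.smulVec fun q => N.smulVec y q.2 * M.smulVec x q.1 :=
        congrArg R.smulVec (kronecker_smulVec_bilin (LinearMap.mul K A).flip M N x y)

end Algebra

theorem commute_kronecker {K m n : Type*} [CommSemiring K] [Fintype m] [Fintype n]
    {M P : Matrix m m K} {N Q : Matrix n n K} (hMP : Commute M P) (hNQ : Commute N Q) :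
    Commute (M ⊗ₖ N) (P ⊗ₖ Q) := by
  rw [Commute, SemiconjBy, ← mul_kronecker_mul, ← mul_kronecker_mul, hMP.eq, hNQ.eq]

end Matrix

theorem commute_JplusQ_JminusQ (p q : ℍ[ℝ]) : Commute (JplusQ p) (JminusQ q) := by
  rw [Commute, SemiconjBy, JplusQ, JminusQ, ← LinearMap.toMatrix_mul, ← LinearMap.toMatrix_mul]
  congr 1
  refine LinearMap.ext fun x => ?_
  simp [mul_assoc]

/-- `R^{λα}_{βρ}` is the entry at `((λ, α), (ρ, β))`. -/
noncomputable def rMatrix (u0 : ℝ) (n1 ubar : ℍ[ℝ]) : Matrix (Fin 4 × Fin 4) (Fin 4 × Fin 4) ℂ :=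
  (u0 : ℂ) • 1 + Complex.I • ((JplusQ n1).map (↑) ⊗ₖ (JplusQ ubar).map (↑))

theorem rMatrix_apply (u0 : ℝ) (n1 ubar : ℍ[ℝ]) (l a r b : Fin 4) :
    rMatrix u0 n1 ubar (l, a) (r, b) =
      (u0 : ℂ) * ((if l = r then (1 : ℂ) else 0) * (if a = b then 1 else 0)) +
        Complex.I * ((JplusQ n1 l r * JplusQ ubar a b : ℝ) : ℂ) := by
  rw [rMatrix, ← one_kronecker_one]
  simp only [Matrix.add_apply, Matrix.smul_apply, kronecker_apply, one_apply, map_apply,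
    smul_eq_mul]
  push_cast
  ring

theorem commute_kronecker_JminusQ_rMatrix (u0 : ℝ) (n1 ubar q1 q2 : ℍ[ℝ]) :
    Commute ((JminusQ q1).map (↑) ⊗ₖ (JminusQ q2).map (↑)) (rMatrix u0 n1 ubar) := by
  have hJ : ∀ p q, Commute ((JminusQ q).map ((↑) : ℝ → ℂ)) ((JplusQ p).map (↑)) := fun p q =>
    ((commute_JplusQ_JminusQ p q).map Complex.ofRealHom.mapMatrix).symm
  exact (((Commute.one_right _).smul_right _).add_right
    ((commute_kronecker (hJ n1 q1) (hJ ubar q2)).smul_right _))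

theorem stmt18_general {A : Type*} [Ring A] [Algebra ℂ A]
    (n1 : ℍ[ℝ])
    (u0 : ℝ)
    (ubar : ℍ[ℝ])
    (R : Fin 4 → Fin 4 → Fin 4 → Fin 4 → ℂ)
    (hR : ∀ l a b r, R l a b r =
      (u0 : ℂ) * ((if l = r then (1 : ℂ) else 0) * (if a = b then 1 else 0)) +
      Complex.I * ((JplusQ n1 l r : ℝ) * (JplusQ ubar a b : ℝ) : ℝ))
    (x1 x2 : Fin 4 → A)
    (hc1 : ∀ l m, x1 l * x1 m = x1 m * x1 l)
    (hc2 : ∀ a b, x2 a * x2 b = x2 b * x2 a)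
    (hrel : ∀ l a, x1 l * x2 a = ∑ b : Fin 4, ∑ r : Fin 4, R l a b r • (x2 b * x1 r))
    (q1 q2 : ℍ[ℝ])
    (y1 y2 : Fin 4 → A)
    (hy1 : y1 = fun l => ∑ n : Fin 4, ((JminusQ q1 l n : ℝ) : ℂ) • x1 n)
    (hy2 : y2 = fun a => ∑ b : Fin 4, ((JminusQ q2 a b : ℝ) : ℂ) • x2 b) :
    (∀ l m, y1 l * y1 m = y1 m * y1 l) ∧
    (∀ a b, y2 a * y2 b = y2 b * y2 a) ∧
    (∀ l a, y1 l * y2 a = ∑ b : Fin 4, ∑ r : Fin 4, R l a b r • (y2 b * y1 r)) := by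
  have hRmat : ∀ l a b r, R l a b r = rMatrix u0 n1 ubar (l, a) (r, b) := fun l a b r => by
    rw [hR, rMatrix_apply]
  have hexchange : ∀ x y : Fin 4 → A,
      (∀ l a, x l * y a = ∑ b : Fin 4, ∑ r : Fin 4, R l a b r • (y b * x r)) ↔
        (fun q : Fin 4 × Fin 4 => x q.1 * y q.2) =
          (rMatrix u0 n1 ubar).smulVec fun q => y q.2 * x q.1 := by
    intro x y
    simp only [funext_iff, Prod.forall, smulVec, Fintype.sum_prod_type_right, hRmat]
  have hy1' : y1 = ((JminusQ q1).map ((↑) : ℝ → ℂ)).smulVec x1 := hy1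
  have hy2' : y2 = ((JminusQ q2).map ((↑) : ℝ → ℂ)).smulVec x2 := hy2
  subst hy1' hy2'
  refine ⟨fun l m => (commute_smulVec hc1 _ _ l m).eq, fun a b => (commute_smulVec hc2 _ _ a b).eq,
    ?_⟩
  rw [hexchange] at hrel ⊢
  exact exchange_relation_smulVec (commute_kronecker_JminusQ_rMatrix u0 n1 ubar q1 q2) hrel

/-- The relations of `𝒜(ℝ⁸_u)` are invariant under the `SU(2) × SU(2)` action
`x₁ ↦ J⁻_{q₁} x₁`, `x₂ ↦ J⁻_{q₂} x₂` by unit quaternions `q₁, q₂`: the transformed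
generators satisfy the same relations with the same R-matrix. -/
theorem stmt18 {A : Type*} [Ring A] [Algebra ℂ A]
    (n1 n2 : ℍ[ℝ]) (hn1re : n1.re = 0) (hn2re : n2.re = 0)
    (hn1 : n1 * star n1 = 1) (hn2 : n2 * star n2 = 1)
    (hortho : (n1 * star n2).re = 0)
    (u0 u1 u2 : ℝ) (hu : u0 ^ 2 + u1 ^ 2 + u2 ^ 2 = 1)
    (ubar : ℍ[ℝ]) (hubar : ubar = u1 • n1 + u2 • n2)
    (R : Fin 4 → Fin 4 → Fin 4 → Fin 4 → ℂ)
    (hR : ∀ l a b r, R l a b r =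
      (u0 : ℂ) * ((if l = r then (1 : ℂ) else 0) * (if a = b then 1 else 0)) +
      Complex.I * ((JplusQ n1 l r : ℝ) * (JplusQ ubar a b : ℝ) : ℝ))
    (x1 x2 : Fin 4 → A)
    (hc1 : ∀ l m, x1 l * x1 m = x1 m * x1 l)
    (hc2 : ∀ a b, x2 a * x2 b = x2 b * x2 a)
    (hrel : ∀ l a, x1 l * x2 a = ∑ b : Fin 4, ∑ r : Fin 4, R l a b r • (x2 b * x1 r))
    (q1 q2 : ℍ[ℝ]) (hq1 : q1 * star q1 = 1) (hq2 : q2 * star q2 = 1)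
    (y1 y2 : Fin 4 → A)
    (hy1 : y1 = fun l => ∑ n : Fin 4, ((JminusQ q1 l n : ℝ) : ℂ) • x1 n)
    (hy2 : y2 = fun a => ∑ b : Fin 4, ((JminusQ q2 a b : ℝ) : ℂ) • x2 b) :
    (∀ l m, y1 l * y1 m = y1 m * y1 l) ∧
    (∀ a b, y2 a * y2 b = y2 b * y2 a) ∧
    (∀ l a, y1 l * y2 a = ∑ b : Fin 4, ∑ r : Fin 4, R l a b r • (y2 b * y1 r)) :=
  stmt18_general n1 u0 ubar R hR x1 x2 hc1 hc2 hrel q1 q2 y1 y2 hy1 hy2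
end
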